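/- Let $k_\theta, k_q, k_d, c_q, \lambda_q > 0$, let $\boldsymbol{\phi} : \mathbb{R} \to \mathbb{R}^9$ be continuous, and let $s, \tilde{\theta} : \mathbb{R} \to \mathbb{R}$ and $\tilde{\boldsymbol{\vartheta}} : \mathbb{R} \to \mathbb{R}^9$ be differentiable, satisfying the closed-loop pitch error dynamics $\dot{s} = -k_\theta\tilde{\theta} - k_q s - k_d\,\mathrm{sign}(s) - \langle\boldsymbol{\phi}, \tilde{\boldsymbol{\vartheta}}\rangle$, $\dot{\tilde{\theta}} = s - \lambda_q\tilde{\theta}$, and $\dot{\tilde{\boldsymbol{\vartheta}}} = c_q\,\boldsymbol{\phi}\,s$ (where $\mathrm{sign}(0)=0$). Then $W(t) = \tfrac{1}{2}s(t)^2 + \tfrac{k_\theta}{2}\tilde{\theta}(t)^2 + \tfrac{1}{2c_q}\|\tilde{\boldsymbol{\vartheta}}(t)\|^2$ satisfies $\dot{W}(t) = -k_q s(t)^2 - k_d|s(t)| - k_\theta\lambda_q\tilde{\theta}(t)^2 \le 0$; in particular $W$ is nonincreasing and $\tilde{\boldsymbol{\vartheta}}$ is bounded. -/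

import Mathlib

/-!
Differentiating `W = ½ s² + (k_θ/2) θ̃² + ‖ϑ̃‖² / (2 c_q)` along the closed loop, the adaptation law
`ϑ̃' = c_q s φ` makes the observer term contribute `s ⟪φ, ϑ̃⟫`, which cancels the estimation error
`-s ⟪φ, ϑ̃⟫` in `s s'`; likewise `k_θ θ̃ s` cancels `-k_θ θ̃ s`. What remains,
`-k_q s² - k_d |s| - k_θ λ_q θ̃²`, is nonpositive, so `W` is antitone and `‖ϑ̃(t)‖² ≤ 2 c_q W(t₀)`.
-/

theorem Real.self_mul_sign (x : ℝ) : x * Real.sign x = |x| := by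
  rcases lt_trichotomy x 0 with hx | rfl | hx
  · rw [Real.sign_of_neg hx, abs_of_neg hx]; ring
  · simp
  · rw [Real.sign_of_pos hx, abs_of_pos hx, mul_one]

section

variable {E : Type*} [NormedAddCommGroup E]

noncomputable def pitchLyapunov (kθ cq : ℝ) (s θt : ℝ → ℝ) (ϑ : ℝ → E) (τ : ℝ) : ℝ :=
  (1 / 2) * (s τ) ^ 2 + (kθ / 2) * (θt τ) ^ 2 + (1 / (2 * cq)) * ‖ϑ τ‖ ^ 2

theorem hasDerivAt_pitchLyapunov [InnerProductSpace ℝ E] {kθ kq kd cq lamq t : ℝ}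
    (hcq : cq ≠ 0) {φ : E} {s θt : ℝ → ℝ} {ϑ : ℝ → E}
    (hs : HasDerivAt s (-kθ * θt t - kq * s t - kd * Real.sign (s t) - inner ℝ φ (ϑ t)) t)
    (hθ : HasDerivAt θt (s t - lamq * θt t) t)
    (hϑ : HasDerivAt ϑ ((cq * s t) • φ) t) :
    HasDerivAt (pitchLyapunov kθ cq s θt ϑ)
      (-kq * (s t) ^ 2 - kd * |s t| - kθ * lamq * (θt t) ^ 2) t := by
  have hW := (((hs.pow 2).const_mul (1 / 2)).add ((hθ.pow 2).const_mul (kθ / 2))).add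
    (hϑ.norm_sq.const_mul (1 / (2 * cq)))
  refine hW.congr_deriv ?_
  rw [real_inner_smul_right, real_inner_comm, ← Real.self_mul_sign]
  field_simp
  ring

theorem sq_norm_le_two_mul_pitchLyapunov {kθ cq : ℝ} (hkθ : 0 ≤ kθ) (hcq : 0 < cq)
    (s θt : ℝ → ℝ) (ϑ : ℝ → E) (t : ℝ) :
    ‖ϑ t‖ ^ 2 ≤ 2 * cq * pitchLyapunov kθ cq s θt ϑ t := by
  have hexpand : 2 * cq * pitchLyapunov kθ cq s θt ϑ t
      = cq * (s t) ^ 2 + cq * kθ * (θt t) ^ 2 + ‖ϑ t‖ ^ 2 := by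
    unfold pitchLyapunov
    field_simp
  rw [hexpand]
  have : 0 ≤ cq * (s t) ^ 2 + cq * kθ * (θt t) ^ 2 := by positivity
  linarith

end

theorem pitch_dissipation_nonpos {kθ kq kd lamq : ℝ} (hkθ : 0 ≤ kθ) (hkq : 0 ≤ kq) (hkd : 0 ≤ kd)
    (hlamq : 0 ≤ lamq) (x y : ℝ) :
    -kq * x ^ 2 - kd * |x| - kθ * lamq * y ^ 2 ≤ 0 := by
  have : 0 ≤ kq * x ^ 2 + kd * |x| + kθ * lamq * y ^ 2 := by positivity
  linarith

theorem pitch_observer_lyapunov_general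
    (kθ kq kd cq lamq : ℝ)
    (hkθ : 0 < kθ) (hkq : 0 < kq) (hkd : 0 < kd) (hcq : 0 < cq) (hlamq : 0 < lamq)
    (φ : ℝ → EuclideanSpace ℝ (Fin 9))
    (s θt : ℝ → ℝ) (ϑ : ℝ → EuclideanSpace ℝ (Fin 9))
    (hs : ∀ t, HasDerivAt s
      (-kθ * θt t - kq * s t - kd * Real.sign (s t) - (inner ℝ (φ t) (ϑ t) : ℝ)) t)
    (hθ : ∀ t, HasDerivAt θt (s t - lamq * θt t) t)
    (hϑ : ∀ t, HasDerivAt ϑ ((cq * s t) • φ t) t) :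
    (∀ t, HasDerivAt
        (fun τ => (1 / 2) * (s τ) ^ 2 + (kθ / 2) * (θt τ) ^ 2
          + (1 / (2 * cq)) * ‖ϑ τ‖ ^ 2)
        (-kq * (s t) ^ 2 - kd * |s t| - kθ * lamq * (θt t) ^ 2) t
      ∧ -kq * (s t) ^ 2 - kd * |s t| - kθ * lamq * (θt t) ^ 2 ≤ 0)
    ∧ Antitone (fun τ => (1 / 2) * (s τ) ^ 2 + (kθ / 2) * (θt τ) ^ 2
        + (1 / (2 * cq)) * ‖ϑ τ‖ ^ 2)
    ∧ ∀ t0 t, t0 ≤ t →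
        ‖ϑ t‖ ^ 2 ≤ 2 * cq * ((1 / 2) * (s t0) ^ 2 + (kθ / 2) * (θt t0) ^ 2
          + (1 / (2 * cq)) * ‖ϑ t0‖ ^ 2) := by
  have hW (t : ℝ) := hasDerivAt_pitchLyapunov hcq.ne' (hs t) (hθ t) (hϑ t)
  have hdiss (t : ℝ) :=
    pitch_dissipation_nonpos hkθ.le hkq.le hkd.le hlamq.le (s t) (θt t)
  have hanti : Antitone (pitchLyapunov kθ cq s θt ϑ) := antitone_of_hasDerivAt_nonpos hW hdiss
  refine ⟨fun t => ⟨hW t, hdiss t⟩, hanti, fun t0 t ht => ?_⟩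
  calc ‖ϑ t‖ ^ 2 ≤ 2 * cq * pitchLyapunov kθ cq s θt ϑ t :=
        sq_norm_le_two_mul_pitchLyapunov hkθ.le hcq s θt ϑ t
    _ ≤ 2 * cq * pitchLyapunov kθ cq s θt ϑ t0 := by gcongr; exact hanti ht

/-- Lyapunov analysis of the closed-loop pitch error dynamics with the adaptive
observer: `W = ½s² + (k_θ/2)θ̃² + (1/(2c_q))‖ϑ̃‖²` has derivative
`-k_q s² - k_d|s| - k_θ lamq θ̃² ≤ 0`, so `W` is nonincreasing and `ϑ̃` is bounded. -/
theorem pitch_observer_lyapunov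
    (kθ kq kd cq lamq : ℝ)
    (hkθ : 0 < kθ) (hkq : 0 < kq) (hkd : 0 < kd) (hcq : 0 < cq) (hlamq : 0 < lamq)
    (φ : ℝ → EuclideanSpace ℝ (Fin 9)) (hφ : Continuous φ)
    (s θt : ℝ → ℝ) (ϑ : ℝ → EuclideanSpace ℝ (Fin 9))
    (hs : ∀ t, HasDerivAt s
      (-kθ * θt t - kq * s t - kd * Real.sign (s t) - (inner ℝ (φ t) (ϑ t) : ℝ)) t)
    (hθ : ∀ t, HasDerivAt θt (s t - lamq * θt t) t)
    (hϑ : ∀ t, HasDerivAt ϑ ((cq * s t) • φ t) t) :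
    (∀ t, HasDerivAt
        (fun τ => (1 / 2) * (s τ) ^ 2 + (kθ / 2) * (θt τ) ^ 2
          + (1 / (2 * cq)) * ‖ϑ τ‖ ^ 2)
        (-kq * (s t) ^ 2 - kd * |s t| - kθ * lamq * (θt t) ^ 2) t
      ∧ -kq * (s t) ^ 2 - kd * |s t| - kθ * lamq * (θt t) ^ 2 ≤ 0)
    ∧ Antitone (fun τ => (1 / 2) * (s τ) ^ 2 + (kθ / 2) * (θt τ) ^ 2
        + (1 / (2 * cq)) * ‖ϑ τ‖ ^ 2)
    ∧ ∀ t0 t, t0 ≤ t →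
        ‖ϑ t‖ ^ 2 ≤ 2 * cq * ((1 / 2) * (s t0) ^ 2 + (kθ / 2) * (θt t0) ^ 2
          + (1 / (2 * cq)) * ‖ϑ t0‖ ^ 2) :=
  pitch_observer_lyapunov_general kθ kq kd cq lamq hkθ hkq hkd hcq hlamq φ s θt ϑ hs hθ hϑ
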